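/- Suppose fᵢ'(z) = z^{nᵢ}·tᵢ(z) with tᵢ : 𝔻 → ℂ holomorphic, tᵢ(0) ≠ 0, and n₁ < n₂, n₃, n₄. Then there exists η > 0 such that for every z with 0 < |z| < η, both ω₊(∂F/∂x(z), ∂F/∂y(z)) > 0 and ω₋(∂F/∂x(z), ∂F/∂y(z)) > 0; i.e. near the branch point the tangent planes of F are symplectic for both symplectic structures. -/

import Mathlib

open Complex ComplexConjugate Metric

/-- The symplectic form `ω₊(u,v) = (u₁v₂ − u₂v₁) + (u₃v₄ − u₄v₃)` on `ℝ⁴ ≅ ℂ²`. -/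
noncomputable def omegaPlus (u v : ℂ × ℂ) : ℝ :=
  (u.1.re * v.1.im - u.1.im * v.1.re) + (u.2.re * v.2.im - u.2.im * v.2.re)

/-- The symplectic form `ω₋(u,v) = (u₁v₂ − u₂v₁) − (u₃v₄ − u₄v₃)` on `ℝ⁴ ≅ ℂ²`. -/
noncomputable def omegaMinus (u v : ℂ × ℂ) : ℝ :=
  (u.1.re * v.1.im - u.1.im * v.1.re) - (u.2.re * v.2.im - u.2.im * v.2.re)

/-!
With `a, b, c, d` the derivatives of `f₁, …, f₄` at `z`, one has `∂F/∂x = (a + b̄, c + d̄)` and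
`∂F/∂y = (i a − i b̄, i c − i d̄)`, so `ω±(∂F/∂x, ∂F/∂y) = (|a|² − |b|²) ± (|c|² − |d|²)`.
Because `n₁` is the strictly smallest vanishing order and `t₁(0) ≠ 0`, each of `b, c, d` is
`o(a)` at `0`, so `|a|² > |b|² + |c|² + |d|²` on a punctured disc, which makes both forms positive.
-/

open Filter Topology Asymptotics

theorem HasDerivAt.hasFDerivAt_add_conj {f g : ℂ → ℂ} {a b z : ℂ}
    (hf : HasDerivAt f a z) (hg : HasDerivAt g b z) :
    HasFDerivAt (fun w => f w + conj (g w))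
      (a • ContinuousLinearMap.id ℝ ℂ +
        conjCLE.toContinuousLinearMap.comp (b • ContinuousLinearMap.id ℝ ℂ)) z := by
  have hg' := conjCLE.toContinuousLinearMap.hasFDerivAt.comp z (hg.hasFDerivAt.restrictScalars ℝ)
  refine ((hf.hasFDerivAt.restrictScalars ℝ).add hg').congr_fderiv ?_
  ext v
  simp [mul_comm]

theorem omegaPlus_add_conj (a b c d : ℂ) :
    omegaPlus (a + conj b, c + conj d) (a * I + conj (b * I), c * I + conj (d * I)) =
      (‖a‖ ^ 2 - ‖b‖ ^ 2) + (‖c‖ ^ 2 - ‖d‖ ^ 2) := by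
  simp only [omegaPlus, Complex.sq_norm, normSq_apply, add_re, add_im, conj_re, conj_im, mul_re,
    mul_im, I_re, I_im]
  ring

theorem omegaMinus_add_conj (a b c d : ℂ) :
    omegaMinus (a + conj b, c + conj d) (a * I + conj (b * I), c * I + conj (d * I)) =
      (‖a‖ ^ 2 - ‖b‖ ^ 2) - (‖c‖ ^ 2 - ‖d‖ ^ 2) := by
  simp only [omegaMinus, Complex.sq_norm, normSq_apply, add_re, add_im, conj_re, conj_im, mul_re,
    mul_im, I_re, I_im]
  ring

theorem isLittleO_pow_mul_of_lt {𝕜 : Type*} [NontriviallyNormedField 𝕜] {m n : ℕ} (hmn : m < n)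
    {s t : 𝕜 → 𝕜} (hs : ContinuousAt s 0) (hs0 : s 0 ≠ 0) (ht : ContinuousAt t 0) :
    (fun z => z ^ n * t z) =o[𝓝 0] fun z => z ^ m * s z := by
  have h1s : (fun _ => (1 : 𝕜)) =O[𝓝 0] s :=
    isBigO_of_div_tendsto_nhds_of_ne_zero (by simpa using hs.tendsto) hs0
  exact (isLittleO_pow_pow hmn).mul_isBigO (ht.isBigO.trans h1s)

theorem eventually_sq_norm_add_lt {α E : Type*} [NormedAddCommGroup E] {l : Filter α}
    {a b c d : α → E} (hb : b =o[l] a) (hc : c =o[l] a) (hd : d =o[l] a)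
    (ha : ∀ᶠ x in l, a x ≠ 0) :
    ∀ᶠ x in l, ‖b x‖ ^ 2 + ‖c x‖ ^ 2 + ‖d x‖ ^ 2 < ‖a x‖ ^ 2 := by
  filter_upwards [hb.def one_half_pos, hc.def one_half_pos, hd.def one_half_pos, ha]
    with x hbx hcx hdx hax
  have hpos : 0 < ‖a x‖ := norm_pos_iff.2 hax
  nlinarith [norm_nonneg (b x), norm_nonneg (c x), norm_nonneg (d x)]

theorem tangent_planes_symplectic_near_branch_point_general
    (n₁ n₂ n₃ n₄ : ℕ)
    (h12 : n₁ < n₂) (h13 : n₁ < n₃) (h14 : n₁ < n₄)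
    (t₁ t₂ t₃ t₄ f₁ f₂ f₃ f₄ : ℂ → ℂ)
    (ht₁ : DifferentiableOn ℂ t₁ (ball (0:ℂ) 1))
    (ht₂ : DifferentiableOn ℂ t₂ (ball (0:ℂ) 1))
    (ht₃ : DifferentiableOn ℂ t₃ (ball (0:ℂ) 1))
    (ht₄ : DifferentiableOn ℂ t₄ (ball (0:ℂ) 1))
    (ht₁0 : t₁ 0 ≠ 0)
    (hf₁ : ∀ z ∈ ball (0:ℂ) 1, HasDerivAt f₁ (z ^ n₁ * t₁ z) z)
    (hf₂ : ∀ z ∈ ball (0:ℂ) 1, HasDerivAt f₂ (z ^ n₂ * t₂ z) z)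
    (hf₃ : ∀ z ∈ ball (0:ℂ) 1, HasDerivAt f₃ (z ^ n₃ * t₃ z) z)
    (hf₄ : ∀ z ∈ ball (0:ℂ) 1, HasDerivAt f₄ (z ^ n₄ * t₄ z) z)
    (F : ℂ → ℂ × ℂ)
    (hF : ∀ z, F z = (f₁ z + conj (f₂ z), f₃ z + conj (f₄ z))) :
    ∃ η > (0:ℝ), ∀ z : ℂ, 0 < ‖z‖ → ‖z‖ < η →
      0 < omegaPlus (fderiv ℝ F z 1) (fderiv ℝ F z Complex.I) ∧
      0 < omegaMinus (fderiv ℝ F z 1) (fderiv ℝ F z Complex.I) := by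
  have hball : ball (0:ℂ) 1 ∈ 𝓝 0 := ball_mem_nhds 0 one_pos
  have hcont {t : ℂ → ℂ} (ht : DifferentiableOn ℂ t (ball 0 1)) : ContinuousAt t 0 :=
    (ht.differentiableAt hball).continuousAt
  have hlower {n : ℕ} {t : ℂ → ℂ} (hn : n₁ < n) (ht : DifferentiableOn ℂ t (ball 0 1)) :
      (fun z => z ^ n * t z) =o[𝓝[≠] 0] fun z => z ^ n₁ * t₁ z :=
    (isLittleO_pow_mul_of_lt hn (hcont ht₁) ht₁0 (hcont ht)).mono nhdsWithin_le_nhds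
  have hlead : ∀ᶠ z in 𝓝[≠] (0:ℂ), z ^ n₁ * t₁ z ≠ 0 := by
    filter_upwards [self_mem_nhdsWithin, nhdsWithin_le_nhds ((hcont ht₁).eventually_ne ht₁0)]
      with z hz hz'
    exact mul_ne_zero (pow_ne_zero _ hz) hz'
  obtain ⟨η, hη, hη'⟩ := Metric.mem_nhdsWithin_iff.1 <|
    (eventually_sq_norm_add_lt (hlower h12 ht₂) (hlower h13 ht₃) (hlower h14 ht₄) hlead).and
      (nhdsWithin_le_nhds hball)
  refine ⟨η, hη, fun z hz0 hzη => ?_⟩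
  obtain ⟨hdom, hz⟩ := hη' ⟨mem_ball_zero_iff.2 hzη, norm_ne_zero_iff.1 hz0.ne'⟩
  have hFz := ((hf₁ z hz).hasFDerivAt_add_conj (hf₂ z hz)).prodMk
    ((hf₃ z hz).hasFDerivAt_add_conj (hf₄ z hz))
  rw [show F = _ from funext hF, hFz.fderiv]
  simp only [ContinuousLinearMap.prod_apply, add_apply,
    ContinuousLinearMap.comp_apply, smul_apply, ContinuousLinearMap.id_apply,
    ContinuousLinearEquiv.coe_coe, conjCLE_apply, smul_eq_mul, mul_one]
  rw [omegaPlus_add_conj, omegaMinus_add_conj]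
  constructor <;> nlinarith

/-- If `fᵢ'(z) = z^{nᵢ} tᵢ(z)` with `tᵢ(0) ≠ 0` and `n₁ < n₂, n₃, n₄`,
then near the branch point the tangent planes of `F` are symplectic for both `ω₊`
and `ω₋`: there is `η > 0` with `ω₊(∂F/∂x, ∂F/∂y) > 0` and `ω₋(∂F/∂x, ∂F/∂y) > 0`
for `0 < |z| < η`. -/
theorem tangent_planes_symplectic_near_branch_point
    (n₁ n₂ n₃ n₄ : ℕ)
    (h12 : n₁ < n₂) (h13 : n₁ < n₃) (h14 : n₁ < n₄)
    (t₁ t₂ t₃ t₄ f₁ f₂ f₃ f₄ : ℂ → ℂ)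
    (ht₁ : DifferentiableOn ℂ t₁ (ball (0:ℂ) 1))
    (ht₂ : DifferentiableOn ℂ t₂ (ball (0:ℂ) 1))
    (ht₃ : DifferentiableOn ℂ t₃ (ball (0:ℂ) 1))
    (ht₄ : DifferentiableOn ℂ t₄ (ball (0:ℂ) 1))
    (ht₁0 : t₁ 0 ≠ 0) (ht₂0 : t₂ 0 ≠ 0) (ht₃0 : t₃ 0 ≠ 0) (ht₄0 : t₄ 0 ≠ 0)
    (hf₁ : ∀ z ∈ ball (0:ℂ) 1, HasDerivAt f₁ (z ^ n₁ * t₁ z) z)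
    (hf₂ : ∀ z ∈ ball (0:ℂ) 1, HasDerivAt f₂ (z ^ n₂ * t₂ z) z)
    (hf₃ : ∀ z ∈ ball (0:ℂ) 1, HasDerivAt f₃ (z ^ n₃ * t₃ z) z)
    (hf₄ : ∀ z ∈ ball (0:ℂ) 1, HasDerivAt f₄ (z ^ n₄ * t₄ z) z)
    (F : ℂ → ℂ × ℂ)
    (hF : ∀ z, F z = (f₁ z + conj (f₂ z), f₃ z + conj (f₄ z))) :
    ∃ η > (0:ℝ), ∀ z : ℂ, 0 < ‖z‖ → ‖z‖ < η →
      0 < omegaPlus (fderiv ℝ F z 1) (fderiv ℝ F z Complex.I) ∧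
      0 < omegaMinus (fderiv ℝ F z 1) (fderiv ℝ F z Complex.I) :=
  tangent_planes_symplectic_near_branch_point_general n₁ n₂ n₃ n₄ h12 h13 h14 t₁ t₂ t₃ t₄ f₁ f₂ f₃
    f₄ ht₁ ht₂ ht₃ ht₄ ht₁0 hf₁ hf₂ hf₃ hf₄ F hF
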